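/- arXiv:1206.6360 — 3 statements merged into one kernel-verified Lean document; each statement's English description precedes it below -/
import Mathlib

section
/- If segments [a,b] and [c,d] in the plane intersect at a point x lying in the open segments (a,b) and (c,d), and a, x, c are not collinear and b, x, d are not collinear, then dist(a,c) + dist(b,d) < dist(a,b) + dist(c,d). -/
/-! Both diagonals of the quadrilateral `a c b d` pass through `x`, so the strict triangle
inequality in the triangles `a x c` and `b x d` bounds `dist a c + dist b d` by the sum of the
four pieces into which `x` cuts `[a, b]` and `[c, d]`. -/

abbrev Plane := EuclideanSpace ℝ (Fin 2)

section StrictConvex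

variable {V P : Type*} [NormedAddCommGroup V] [NormedSpace ℝ V] [StrictConvexSpace ℝ V]
  [MetricSpace P] [NormedAddTorsor V P]

theorem dist_lt_dist_add_dist_of_not_collinear {a b c : P}
    (h : ¬ Collinear ℝ ({a, b, c} : Set P)) : dist a c < dist a b + dist b c :=
  dist_lt_dist_add_dist_iff.2 fun hw => h hw.collinear

theorem dist_add_dist_lt_of_wbtw_of_not_collinear {a b c d x : P}
    (hab : Wbtw ℝ a x b) (hcd : Wbtw ℝ c x d)
    (haxc : ¬ Collinear ℝ ({a, x, c} : Set P)) (hbxd : ¬ Collinear ℝ ({b, x, d} : Set P)) :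
    dist a c + dist b d < dist a b + dist c d := by
  have hac := dist_lt_dist_add_dist_of_not_collinear haxc
  have hbd := dist_lt_dist_add_dist_of_not_collinear hbxd
  rw [← hab.dist_add_dist, ← hcd.dist_add_dist]
  linarith [dist_comm b x, dist_comm x c]

end StrictConvex

theorem uncrossing_inequality (a b c d x : Plane)
    (hab : x ∈ openSegment ℝ a b) (hcd : x ∈ openSegment ℝ c d)
    (haxc : ¬ Collinear ℝ ({a, x, c} : Set Plane))
    (hbxd : ¬ Collinear ℝ ({b, x, d} : Set Plane)) :
    dist a c + dist b d < dist a b + dist c d :=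
  dist_add_dist_lt_of_wbtw_of_not_collinear
    (mem_segment_iff_wbtw.1 (openSegment_subset_segment ℝ a b hab))
    (mem_segment_iff_wbtw.1 (openSegment_subset_segment ℝ c d hcd)) haxc hbxd
end

section
/- For finite sets R, B ⊆ ℝ² with |R| = |B| = n and R ∪ B in general position, there exists a perfect bichromatic matching (a bijection from R to B) whose n straight segments are pairwise non-crossing. -/
/-- A set of points is in general position if no three distinct points are collinear. -/
def GenPos (P : Set Plane) : Prop :=
  ∀ p ∈ P, ∀ q ∈ P, ∀ r ∈ P, p ≠ q → p ≠ r → q ≠ r →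
    ¬ Collinear ℝ ({p, q, r} : Set Plane)

/-- Two segments cross if their relative interiors (open segments) intersect. -/
def Cross (a b c d : Plane) : Prop :=
  (openSegment ℝ a b ∩ openSegment ℝ c d).Nonempty

/-- `M` is a perfect matching of `P`: each edge joins two distinct points of `P`,
and every point of `P` lies on exactly one edge. -/
def IsPerfectMatching (P : Finset Plane) (M : Finset (Plane × Plane)) : Prop :=
  (∀ e ∈ M, e.1 ∈ P ∧ e.2 ∈ P ∧ e.1 ≠ e.2) ∧
  (∀ p ∈ P, ∃! e, e ∈ M ∧ (p = e.1 ∨ p = e.2))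

/-- No two distinct segments of `M` cross. -/
def NonCrossing (M : Finset (Plane × Plane)) : Prop :=
  ∀ e ∈ M, ∀ f ∈ M, e ≠ f → ¬ Cross e.1 e.2 f.1 f.2

/-!
Take a bijection `R → B` of minimal total length. If two of its segments `[r, a]` and `[r', a']`
crossed at `x`, the triangle inequality through `x` would give `|ra'| + |r'a| < |ra| + |r'a'|`,
strictly because `r, a, a'` are not collinear; so swapping the partners of `r` and `r'` would
shorten the matching.
-/

open Set

section Geometry

variable {E : Type*} [NormedAddCommGroup E] [NormedSpace ℝ E]

lemma collinear_of_wbtw_of_wbtw {r x a a' : E} (hrx : r ≠ x) (ha : Wbtw ℝ r x a)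
    (ha' : Wbtw ℝ r x a') : Collinear ℝ ({r, a, a'} : Set E) := by
  have mem_line {b : E} (hb : Wbtw ℝ r x b) : b ∈ line[ℝ, r, x] :=
    hb.collinear.mem_affineSpan_of_mem_of_ne (by simp) (by simp) (by simp) hrx
  exact collinear_triple_of_mem_affineSpan_pair (left_mem_affineSpan_pair ℝ r x)
    (mem_line ha) (mem_line ha')

variable [StrictConvexSpace ℝ E]

lemma dist_add_dist_lt_of_mem_openSegment {r a r' a' x : E}
    (hc : ¬ Collinear ℝ ({r, a, a'} : Set E))
    (hx : x ∈ openSegment ℝ r a) (hx' : x ∈ segment ℝ r' a') :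
    dist r a' + dist r' a < dist r a + dist r' a' := by
  have hra : r ≠ a := by
    rintro rfl
    exact hc (by simpa using collinear_pair ℝ r a')
  have hrx : r ≠ x := by
    rintro rfl
    exact hra (left_mem_openSegment_iff.mp hx)
  have hwa : Wbtw ℝ r x a := mem_segment_iff_wbtw.mp (openSegment_subset_segment ℝ _ _ hx)
  have hlt : dist r a' < dist r x + dist x a' :=
    (dist_triangle r x a').lt_of_ne fun h =>
      hc (collinear_of_wbtw_of_wbtw hrx hwa (dist_add_dist_eq_iff.mp h.symm))
  have hxa : dist r x + dist x a = dist r a := dist_add_dist_eq_iff.mpr hwa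
  have hxa' : dist r' x + dist x a' = dist r' a' :=
    dist_add_dist_eq_iff.mpr (mem_segment_iff_wbtw.mp hx')
  linarith [dist_triangle r' x a]

end Geometry

section Assignment

variable {α β : Type*} {s : Finset α} {t : Finset β}

lemma exists_bijOn_forall_sum_le (c : α → β → ℝ) (h : ∃ f : α → β, BijOn f s t) :
    ∃ f : α → β, BijOn f s t ∧
      ∀ g : α → β, BijOn g s t → ∑ x ∈ s, c x (f x) ≤ ∑ x ∈ s, c x (g x) := by
  -- the total cost of `g` only depends on its restriction `s → t`
  have hfin : ((fun g => ∑ x ∈ s, c x (g x)) '' {g | BijOn g s t}).Finite := by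
    refine (finite_range fun φ : s → t => ∑ x : s, c x (φ x)).subset ?_
    rintro _ ⟨g, hg, rfl⟩
    exact ⟨hg.mapsTo.restrict, Finset.sum_coe_sort s fun x => c x (g x)⟩
  obtain ⟨f, hf, hmin⟩ := hfin.exists_minimalFor' _ _ h
  exact ⟨f, hf, fun g hg => not_lt.mp fun hlt => hlt.not_ge (hmin hg hlt.le)⟩

lemma Set.BijOn.add_le_add_swap_of_forall_sum_le [DecidableEq α] {c : α → β → ℝ}
    {f : α → β} (hf : BijOn f s t)
    (hmin : ∀ g : α → β, BijOn g s t → ∑ x ∈ s, c x (f x) ≤ ∑ x ∈ s, c x (g x))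
    {r r' : α} (hr : r ∈ s) (hr' : r' ∈ s) (hne : r ≠ r') :
    c r (f r) + c r' (f r') ≤ c r (f r') + c r' (f r) := by
  set g := f ∘ Equiv.swap r r'
  have hg : BijOn g s t := hf.comp (Equiv.swap_bijOn_self (by simp [hr, hr']))
  have hdiff : ∑ x ∈ s, (c x (g x) - c x (f x)) =
      (c r (f r') - c r (f r)) + (c r' (f r) - c r' (f r')) := by
    rw [Finset.sum_eq_add_of_mem r r' hr hr' hne fun x _ hx => by
      simp [g, Equiv.swap_apply_of_ne_of_ne hx.1 hx.2]]
    simp [g]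
  rw [Finset.sum_sub_distrib] at hdiff
  linarith [hmin g hg]

end Assignment

theorem exists_noncrossing_bichromatic_matching (n : ℕ) (R B : Finset Plane)
    (hR : R.card = n) (hB : B.card = n) (hdisj : Disjoint R B)
    (hgp : GenPos (↑R ∪ ↑B : Set Plane)) :
    ∃ f : Plane → Plane, Set.BijOn f ↑R ↑B ∧
      ∀ r ∈ R, ∀ r' ∈ R, r ≠ r' → ¬ Cross r (f r) r' (f r') := by
  classical
  obtain ⟨f, hf, hmin⟩ := exists_bijOn_forall_sum_le dist
    (R.finite_toSet.exists_bijOn_of_encard_eq (t := (B : Set Plane)) (by simp [hR, hB]))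
  refine ⟨f, hf, fun r hr r' hr' hne ⟨x, hx, hx'⟩ => ?_⟩
  have hfr : f r ∈ B := hf.mapsTo hr
  have hfr' : f r' ∈ B := hf.mapsTo hr'
  have hc : ¬ Collinear ℝ ({r, f r, f r'} : Set Plane) :=
    hgp r (Or.inl hr) (f r) (Or.inr hfr) (f r') (Or.inr hfr')
      (ne_of_mem_of_not_mem hr (Finset.disjoint_right.mp hdisj hfr))
      (ne_of_mem_of_not_mem hr (Finset.disjoint_right.mp hdisj hfr'))
      (hf.injOn.ne hr hr' hne)
  exact (dist_add_dist_lt_of_mem_openSegment hc hx (openSegment_subset_segment ℝ _ _ hx')).not_ge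
    (hf.add_le_add_swap_of_forall_sum_le hmin hr hr' hne)
end

section
/- Let M be a partial matching on a point set P, and construct G(M) by replacing each vertex v of P by a fixed 7-vertex gadget graph H_v in which one distinguished vertex u_v has degree 2 and all other vertices have degree 3, with the edges of M joining the distinguished vertices of their endpoints' gadgets. Then M can be augmented to a perfect matching of P if and only if G(M) can be augmented to a 3-regular graph by adding edges between distinguished vertices. -/
/-!
The added edges `F` only touch distinguished vertices, so every other vertex keeps its three gadget
neighbours. The distinguished vertex of `a` has its two gadget neighbours plus one neighbour for
each partner of `a` under `M ∪ F`; hence `G(M) ⊔ F` is cubic exactly when every point has a unique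
partner under `M ∪ F`, i.e. when `M ∪ F` is a perfect matching extending `M`. Conversely, a perfect
matching `M' ⊇ M` gives the cubic augmentation by the edges of `M' \ M`.
-/

/-- The gadget construction `G(M)`: the disjoint union of a copy of the gadget
graph `H` (on vertex set `Fin 7`) for every vertex of `α`, together with an edge
between the distinguished vertices `u` of the gadgets of `v` and `w` for every
matched pair `m v w`. -/
def gadgetGraph {α : Type*} (H : SimpleGraph (Fin 7)) (u : Fin 7) (m : α → α → Prop) :
    SimpleGraph (α × Fin 7) :=
  SimpleGraph.fromRel (fun x y =>
    (x.1 = y.1 ∧ H.Adj x.2 y.2) ∨ (x.2 = u ∧ y.2 = u ∧ m x.1 y.1))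

/-- `m'` is a partial matching relation extending `m`. -/
def IsMatchingRel {α : Type*} (m : α → α → Prop) : Prop :=
  Symmetric m ∧ (∀ a, ¬ m a a) ∧ ∀ a b c, m a b → m a c → b = c

theorem Set.encard_setOf_eq_one_iff_existsUnique {β : Type*} {p : β → Prop} :
    {b | p b}.encard = 1 ↔ ∃! b, p b := by
  simp only [Set.encard_eq_one, Set.eq_singleton_iff_unique_mem]
  rfl

theorem IsMatchingRel.existsUnique {α : Type*} {r : α → α → Prop} (hr : IsMatchingRel r)
    (htot : ∀ a, ∃ b, r a b) (a : α) : ∃! b, r a b :=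
  (htot a).elim fun b hb => ⟨b, hb, fun c hc => hr.2.2 a c b hc hb⟩

theorem IsMatchingRel.of_existsUnique {α : Type*} {r : α → α → Prop} [Std.Symm r] [Std.Irrefl r]
    (h : ∀ a, ∃! b, r a b) : IsMatchingRel r :=
  ⟨fun _ _ => symm_of r, irrefl_of r, fun a _ _ hb hc => (h a).unique hb hc⟩

section

variable {α : Type*} {H : SimpleGraph (Fin 7)} {u : Fin 7} {m : α → α → Prop}
  [Std.Symm m] [Std.Irrefl m]

theorem gadgetGraph_adj {x y : α × Fin 7} :
    (gadgetGraph H u m).Adj x y ↔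
      (x.1 = y.1 ∧ H.Adj x.2 y.2) ∨ (x.2 = u ∧ y.2 = u ∧ m x.1 y.1) := by
  have hne : (x.1 = y.1 ∧ H.Adj x.2 y.2) ∨ (x.2 = u ∧ y.2 = u ∧ m x.1 y.1) → x ≠ y := by
    rintro (⟨-, h⟩ | ⟨-, -, h⟩) rfl
    exacts [H.loopless.irrefl _ h, irrefl_of m _ h]
  rw [gadgetGraph, SimpleGraph.fromRel_adj]
  constructor
  · rintro ⟨-, h | ⟨h1, h2⟩ | ⟨h1, h2, h3⟩⟩
    · exact h
    · exact .inl ⟨h1.symm, h2.symm⟩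
    · exact .inr ⟨h2, h1, symm_of m h3⟩
  · exact fun h => ⟨hne h, .inl h⟩

theorem gadgetGraph_bot_adj {x y : α × Fin 7} :
    (gadgetGraph ⊥ u m).Adj x y ↔ x.2 = u ∧ y.2 = u ∧ m x.1 y.1 := by
  simp [gadgetGraph_adj]

variable {F : SimpleGraph (α × Fin 7)}

theorem neighborSet_gadgetGraph_sup_of_ne
    (hF : ∀ x y, F.Adj x y → x.2 = u ∧ y.2 = u) (a : α) {i : Fin 7} (hi : i ≠ u) :
    (gadgetGraph H u m ⊔ F).neighborSet (a, i) = Prod.mk a '' H.neighborSet i := by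
  ext ⟨b, j⟩
  have hFab : ¬ F.Adj (a, i) (b, j) := fun h => hi (hF _ _ h).1
  simp [gadgetGraph_adj, hi, hFab, eq_comm, and_comm]

theorem neighborSet_gadgetGraph_sup_self
    (hF : ∀ x y, F.Adj x y → x.2 = u ∧ y.2 = u) (a : α) :
    (gadgetGraph H u m ⊔ F).neighborSet (a, u) =
      Prod.mk a '' H.neighborSet u ∪ (·, u) '' {b | m a b ∨ F.Adj (a, u) (b, u)} := by
  ext ⟨b, j⟩
  rcases eq_or_ne j u with rfl | hj
  · simp [gadgetGraph_adj]
  · have hFab : ¬ F.Adj (a, u) (b, j) := fun h => hj (hF _ _ h).2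
    simp [gadgetGraph_adj, hj, hj.symm, hFab, and_comm]

theorem ncard_neighborSet_gadgetGraph_sup_of_ne
    (hH : ∀ i : Fin 7, i ≠ u → (H.neighborSet i).ncard = 3)
    (hF : ∀ x y, F.Adj x y → x.2 = u ∧ y.2 = u) (a : α) {i : Fin 7} (hi : i ≠ u) :
    ((gadgetGraph H u m ⊔ F).neighborSet (a, i)).ncard = 3 := by
  rw [neighborSet_gadgetGraph_sup_of_ne hF a hi,
    Set.ncard_image_of_injective _ (Prod.mk_right_injective a), hH i hi]

theorem ncard_neighborSet_gadgetGraph_sup_self_eq_three_iff (hu : (H.neighborSet u).ncard = 2)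
    (hF : ∀ x y, F.Adj x y → x.2 = u ∧ y.2 = u) (a : α) :
    ((gadgetGraph H u m ⊔ F).neighborSet (a, u)).ncard = 3 ↔
      ∃! b, m a b ∨ F.Adj (a, u) (b, u) := by
  have hdisj : Disjoint (Prod.mk a '' H.neighborSet u)
      ((·, u) '' {b | m a b ∨ F.Adj (a, u) (b, u)}) := by
    rw [Set.disjoint_left]
    rintro _ ⟨j, hj, rfl⟩ ⟨b, -, hb⟩
    exact H.ne_of_adj hj (congrArg Prod.snd hb)
  rw [Set.ncard_def, ENat.toNat_eq_iff (by norm_num), neighborSet_gadgetGraph_sup_self hF a,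
    Set.encard_union_eq hdisj, (Prod.mk_right_injective a).encard_image,
    (Prod.mk_left_injective u).encard_image, ← (Set.toFinite _).cast_ncard_eq, hu,
    ← Set.encard_setOf_eq_one_iff_existsUnique, show ((3 : ℕ) : ℕ∞) = (2 : ℕ) + 1 by norm_num]
  exact (ENat.add_right_injective_of_ne_top (by simp)).eq_iff

theorem forall_ncard_neighborSet_gadgetGraph_sup_eq_three_iff
    (hu : (H.neighborSet u).ncard = 2) (hH : ∀ i : Fin 7, i ≠ u → (H.neighborSet i).ncard = 3)
    (hF : ∀ x y, F.Adj x y → x.2 = u ∧ y.2 = u) :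
    (∀ x, ((gadgetGraph H u m ⊔ F).neighborSet x).ncard = 3) ↔
      ∀ a, ∃! b, m a b ∨ F.Adj (a, u) (b, u) := by
  refine ⟨fun h a => (ncard_neighborSet_gadgetGraph_sup_self_eq_three_iff hu hF a).1 (h (a, u)),
    fun h ⟨a, i⟩ => ?_⟩
  rcases eq_or_ne i u with rfl | hi
  · exact (ncard_neighborSet_gadgetGraph_sup_self_eq_three_iff hu hF a).2 (h a)
  · exact ncard_neighborSet_gadgetGraph_sup_of_ne hH hF a hi

theorem exists_cubic_augmentation_of_isMatchingRel
    (hu : (H.neighborSet u).ncard = 2) (hH : ∀ i : Fin 7, i ≠ u → (H.neighborSet i).ncard = 3)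
    {m' : α → α → Prop} (hm' : IsMatchingRel m') (hle : ∀ a b, m a b → m' a b)
    (htot : ∀ a, ∃ b, m' a b) :
    ∃ F : SimpleGraph (α × Fin 7),
      (∀ x y, F.Adj x y → x.2 = u ∧ y.2 = u) ∧
      (∀ x y, F.Adj x y → ¬ (gadgetGraph H u m).Adj x y) ∧
      ∀ x, (((gadgetGraph H u m) ⊔ F).neighborSet x).ncard = 3 := by
  let r a b := m' a b ∧ ¬ m a b
  have : Std.Symm r := ⟨fun _ _ h => ⟨hm'.1 h.1, fun h' => h.2 (symm_of m h')⟩⟩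
  have : Std.Irrefl r := ⟨fun a h => hm'.2.1 a h.1⟩
  have hF : ∀ x y, (gadgetGraph ⊥ u r).Adj x y → x.2 = u ∧ y.2 = u :=
    fun x y h => (gadgetGraph_bot_adj.1 h).imp_right And.left
  refine ⟨gadgetGraph ⊥ u r, hF, ?_, ?_⟩
  · intro x y hnew hold
    obtain ⟨hx, hy, -, hnm⟩ := gadgetGraph_bot_adj.1 hnew
    rcases gadgetGraph_adj.1 hold with ⟨-, hadj⟩ | ⟨-, -, hmxy⟩
    · exact H.ne_of_adj hadj (hx.trans hy.symm)
    · exact hnm hmxy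
  · rw [forall_ncard_neighborSet_gadgetGraph_sup_eq_three_iff hu hH hF]
    intro a
    have hpartner : ∀ b, (m a b ∨ (gadgetGraph ⊥ u r).Adj (a, u) (b, u)) ↔ m' a b := fun b => by
      have := hle a b
      rw [gadgetGraph_bot_adj]
      tauto
    simpa only [hpartner] using hm'.existsUnique htot a

end

theorem matching_augmentation_iff_cubic_augmentation_general
    {α : Type*} (H : SimpleGraph (Fin 7)) (u : Fin 7)
    (hu : (H.neighborSet u).ncard = 2)
    (hH : ∀ i : Fin 7, i ≠ u → (H.neighborSet i).ncard = 3)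
    (m : α → α → Prop) (hm : IsMatchingRel m) :
    (∃ m' : α → α → Prop, IsMatchingRel m' ∧ (∀ a b, m a b → m' a b) ∧
      ∀ a, ∃ b, m' a b) ↔
    (∃ F : SimpleGraph (α × Fin 7),
      (∀ x y, F.Adj x y → x.2 = u ∧ y.2 = u) ∧
      (∀ x y, F.Adj x y → ¬ (gadgetGraph H u m).Adj x y) ∧
      ∀ x, (((gadgetGraph H u m) ⊔ F).neighborSet x).ncard = 3) := by
  have : Std.Symm m := ⟨fun _ _ h => hm.1 h⟩
  have : Std.Irrefl m := ⟨hm.2.1⟩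
  refine ⟨fun ⟨_, hm', hle, htot⟩ =>
    exists_cubic_augmentation_of_isMatchingRel hu hH hm' hle htot, fun ⟨F, hF, _, hcubic⟩ => ?_⟩
  rw [forall_ncard_neighborSet_gadgetGraph_sup_eq_three_iff hu hH hF] at hcubic
  let m' a b := m a b ∨ F.Adj (a, u) (b, u)
  have : Std.Symm m' := ⟨fun _ _ => Or.imp (symm_of m) F.adj_symm⟩
  have : Std.Irrefl m' := ⟨fun a => not_or.2 ⟨irrefl_of m a, F.irrefl⟩⟩
  exact ⟨m', .of_existsUnique hcubic, fun _ _ => .inl, fun a => (hcubic a).exists⟩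

theorem matching_augmentation_iff_cubic_augmentation
    {α : Type*} [Fintype α] (H : SimpleGraph (Fin 7)) (u : Fin 7)
    (hu : (H.neighborSet u).ncard = 2)
    (hH : ∀ i : Fin 7, i ≠ u → (H.neighborSet i).ncard = 3)
    (m : α → α → Prop) (hm : IsMatchingRel m) :
    (∃ m' : α → α → Prop, IsMatchingRel m' ∧ (∀ a b, m a b → m' a b) ∧
      ∀ a, ∃ b, m' a b) ↔
    (∃ F : SimpleGraph (α × Fin 7),
      (∀ x y, F.Adj x y → x.2 = u ∧ y.2 = u) ∧
      (∀ x y, F.Adj x y → ¬ (gadgetGraph H u m).Adj x y) ∧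
      ∀ x, (((gadgetGraph H u m) ⊔ F).neighborSet x).ncard = 3) :=
  matching_augmentation_iff_cubic_augmentation_general H u hu hH m hm
end
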